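/- Under the stated IBCN assumptions, given ε ∈ (0,1], let K_ε = {k ≥ 0 : ‖∇f(x_k)‖ ≥ ε} and let S = {k : ρ_k ≥ η₁} be the successful iterations. Then |K_ε ∩ S| ≤ ((f(x₀) − f_min)/c₁) ε^{−2}, where c₁ = θ η₁ (1 − β) min{θβ/H_max, √(3θβ/σ_max)}. -/

import Mathlib

/-!
Write `g_k`, `H_k` for the block gradient and Hessian and `Δ_k = q_k(0) - q_k(s_k)`. Since the
step does at least as well as `ŝ_k` on the cubic model, and the choice of `α̂_k` makes the
quadratic and cubic terms at `ŝ_k` each cost at most `(β/2) α̂_k ‖g_k‖²`,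
`Δ_k ≥ (1 - β) α̂_k ‖g_k‖² + (σ_k/6) ‖s_k‖³`. The Lipschitz Hessian gives
`f(x_k + U s_k) ≤ q_k(s_k) + (L/6) ‖s_k‖³`, so `ρ_k < η₂` forces `(1 - η₂) σ_k < L`, and the
update rules keep `σ_k ≤ σ_max`. Along the (monotone) iterates `‖H_k‖ ≤ H_max`, and the greedy
rule gives `‖g_k‖ ≥ θ ε` on `K_ε`, so `α̂_k ‖g_k‖² ≥ θ min{θβ/H_max, √(3θβ/σ_max)} ε²`: every
successful iteration in `K_ε` decreases `f` by at least `c₁ ε²`, and `f ≥ f_min` bounds their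
number.
-/

open scoped RealInnerProductSpace

noncomputable section

/-- `U_I`: extension by zero from block coordinates to full coordinates. -/
def blockIncl {n : ℕ} (I : Finset (Fin n)) :
    EuclideanSpace ℝ ↥I →ₗ[ℝ] EuclideanSpace ℝ (Fin n) where
  toFun s := WithLp.toLp 2 (fun i => if h : i ∈ I then s ⟨i, h⟩ else 0)
  map_add' s t := by ext i; by_cases h : i ∈ I <;> simp [h]
  map_smul' c s := by ext i; by_cases h : i ∈ I <;> simp [h]

/-- `U_Iᵀ`: restriction of a vector to the block coordinates. -/
def blockRestr {n : ℕ} (I : Finset (Fin n)) :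
    EuclideanSpace ℝ (Fin n) →ₗ[ℝ] EuclideanSpace ℝ ↥I where
  toFun x := WithLp.toLp 2 (fun i => x i)
  map_add' x y := by ext i; simp
  map_smul' c x := by ext i; simp

/-- Block Hessian `U_Iᵀ H U_I` as a continuous linear map. -/
def blockHess {n : ℕ} (I : Finset (Fin n))
    (H : EuclideanSpace ℝ (Fin n) →L[ℝ] EuclideanSpace ℝ (Fin n)) :
    EuclideanSpace ℝ ↥I →L[ℝ] EuclideanSpace ℝ ↥I :=
  LinearMap.toContinuousLinearMap
    ((blockRestr I) ∘ₗ ((H : EuclideanSpace ℝ (Fin n) →ₗ[ℝ] EuclideanSpace ℝ (Fin n)) ∘ₗ blockIncl I))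

/-- Quadratic model `q(s) = f₀ + gᵀs + (1/2) sᵀ H s`. -/
def quadModel {E : Type*} [NormedAddCommGroup E] [InnerProductSpace ℝ E]
    (f₀ : ℝ) (g : E) (H : E →L[ℝ] E) (s : E) : ℝ :=
  f₀ + ⟪g, s⟫ + (1 / 2) * ⟪s, H s⟫

/-- Cubic model `m(s) = q(s) + (σ/6) ‖s‖³`. -/
def cubicModel {E : Type*} [NormedAddCommGroup E] [InnerProductSpace ℝ E]
    (f₀ : ℝ) (g : E) (H : E →L[ℝ] E) (σ : ℝ) (s : E) : ℝ :=
  quadModel f₀ g H s + σ / 6 * ‖s‖ ^ 3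

/-- Gradient of the cubic model: `∇m(s) = g + H s + (σ/2) ‖s‖ s`. -/
def cubicModelGrad {E : Type*} [NormedAddCommGroup E] [InnerProductSpace ℝ E]
    (g : E) (H : E →L[ℝ] E) (σ : ℝ) (s : E) : E :=
  g + H s + (σ / 2 * ‖s‖) • s

/-- The stepsize `α̂ = min{β/‖H‖, √(3β/(σ‖g‖))}`, the first argument being `+∞` if `H = 0`. -/
def alphaHat {E : Type*} [NormedAddCommGroup E] [InnerProductSpace ℝ E]
    (β σ : ℝ) (g : E) (H : E →L[ℝ] E) : ℝ :=
  haveI := Classical.dec (H = 0)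
  if H = 0 then Real.sqrt (3 * β / (σ * ‖g‖))
  else min (β / ‖H‖) (Real.sqrt (3 * β / (σ * ‖g‖)))

/-- The Cauchy-like point `ŝ = -α̂ g`. -/
def sHat {E : Type*} [NormedAddCommGroup E] [InnerProductSpace ℝ E]
    (β σ : ℝ) (g : E) (H : E →L[ℝ] E) : E :=
  -(alphaHat β σ g H) • g

section Block
variable {n : ℕ} (I : Finset (Fin n))

lemma blockRestr_blockIncl (s : EuclideanSpace ℝ ↥I) : blockRestr I (blockIncl I s) = s := by
  ext i
  simp [blockRestr, blockIncl]

lemma inner_blockIncl (s : EuclideanSpace ℝ ↥I) (y : EuclideanSpace ℝ (Fin n)) :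
    ⟪blockIncl I s, y⟫ = ⟪s, blockRestr I y⟫ := by
  simp only [PiLp.inner_apply, RCLike.inner_apply, conj_trivial]
  rw [← Finset.sum_subset I.subset_univ fun i _ hi => by simp [blockIncl, hi],
    ← Finset.sum_attach I, Finset.univ_eq_attach]
  exact Finset.sum_congr rfl fun i _ => by simp [blockIncl, blockRestr, i.2]

lemma norm_blockIncl (s : EuclideanSpace ℝ ↥I) : ‖blockIncl I s‖ = ‖s‖ := by
  have h : ‖blockIncl I s‖ ^ 2 = ‖s‖ ^ 2 := by
    rw [← real_inner_self_eq_norm_sq, inner_blockIncl, blockRestr_blockIncl,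
      real_inner_self_eq_norm_sq]
  exact (pow_left_inj₀ (norm_nonneg _) (norm_nonneg _) two_ne_zero).mp h

lemma norm_blockRestr_le (y : EuclideanSpace ℝ (Fin n)) : ‖blockRestr I y‖ ≤ ‖y‖ := by
  have h : ‖blockRestr I y‖ ^ 2 ≤ ‖blockRestr I y‖ * ‖y‖ := by
    rw [← real_inner_self_eq_norm_sq, ← inner_blockIncl, ← norm_blockIncl I (blockRestr I y)]
    exact real_inner_le_norm _ _
  nlinarith [norm_nonneg (blockRestr I y), norm_nonneg y]

lemma norm_blockHess_le (H : EuclideanSpace ℝ (Fin n) →L[ℝ] EuclideanSpace ℝ (Fin n)) :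
    ‖blockHess I H‖ ≤ ‖H‖ :=
  ContinuousLinearMap.opNorm_le_bound _ (norm_nonneg H) fun s =>
    calc ‖blockRestr I (H (blockIncl I s))‖ ≤ ‖H (blockIncl I s)‖ := norm_blockRestr_le I _
      _ ≤ ‖H‖ * ‖blockIncl I s‖ := H.le_opNorm _
      _ = ‖H‖ * ‖s‖ := by rw [norm_blockIncl]

lemma quadModel_blockRestr_blockHess (f₀ : ℝ) (g : EuclideanSpace ℝ (Fin n))
    (H : EuclideanSpace ℝ (Fin n) →L[ℝ] EuclideanSpace ℝ (Fin n)) (s : EuclideanSpace ℝ ↥I) :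
    quadModel f₀ (blockRestr I g) (blockHess I H) s = quadModel f₀ g H (blockIncl I s) := by
  have hH : blockHess I H s = blockRestr I (H (blockIncl I s)) := rfl
  rw [quadModel, quadModel, hH, ← inner_blockIncl, real_inner_comm, ← inner_blockIncl,
    real_inner_comm]

end Block

lemma nonpos_of_hasDerivAt_of_nonpos {φ φ' : ℝ → ℝ} (hφ : ∀ t, HasDerivAt φ (φ' t) t)
    (h0 : φ 0 ≤ 0) (h' : ∀ t, 0 < t → φ' t ≤ 0) {t : ℝ} (ht : 0 ≤ t) : φ t ≤ 0 := by
  have hanti : AntitoneOn φ (Set.Ici 0) :=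
    antitoneOn_of_hasDerivWithinAt_nonpos (convex_Ici 0)
      (fun u _ => (hφ u).continuousAt.continuousWithinAt)
      (fun u _ => (hφ u).hasDerivWithinAt) (fun u hu => h' u (by simpa using hu))
  exact (hanti Set.self_mem_Ici ht ht).trans h0

lemma apply_one_le_of_second_deriv_sub_le {φ ψ χ : ℝ → ℝ} {K : ℝ}
    (hφ : ∀ t, HasDerivAt φ (ψ t) t) (hψ : ∀ t, HasDerivAt ψ (χ t) t)
    (hχ : ∀ t, 0 < t → χ t - χ 0 ≤ K * t) :
    φ 1 ≤ φ 0 + ψ 0 + χ 0 / 2 + K / 6 := by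
  -- Integrate the bound on `χ` twice, through the monotonicity of the Taylor remainders.
  have hψ_le : ∀ t, 0 ≤ t → ψ t - ψ 0 - t * χ 0 - K / 2 * t ^ 2 ≤ 0 := fun t ht =>
    nonpos_of_hasDerivAt_of_nonpos (φ := fun t => ψ t - ψ 0 - t * χ 0 - K / 2 * t ^ 2)
      (φ' := fun u => χ u - χ 0 - K * u)
      (fun u => ((((hψ u).sub_const (ψ 0)).sub ((hasDerivAt_id u).mul_const (χ 0))).sub
        ((hasDerivAt_pow 2 u).const_mul (K / 2))).congr_deriv (by push_cast; ring))
      (by simp) (fun u hu => by linarith [hχ u hu]) ht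
  have hφ_le := nonpos_of_hasDerivAt_of_nonpos
    (φ := fun t => φ t - φ 0 - t * ψ 0 - t ^ 2 / 2 * χ 0 - K / 6 * t ^ 3)
    (φ' := fun t => ψ t - ψ 0 - t * χ 0 - K / 2 * t ^ 2)
    (fun u => (((((hφ u).sub_const (φ 0)).sub ((hasDerivAt_id u).mul_const (ψ 0))).sub
        (((hasDerivAt_pow 2 u).div_const 2).mul_const (χ 0))).sub
        ((hasDerivAt_pow 3 u).const_mul (K / 6))).congr_deriv (by push_cast; ring))
    (by simp) (fun t ht => hψ_le t ht.le) zero_le_one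
  simp only [one_pow, one_mul] at hφ_le
  linarith

section Model
variable {E : Type*} [NormedAddCommGroup E] [InnerProductSpace ℝ E]

lemma apply_add_le_quadModel_add [CompleteSpace E] {f : E → ℝ} {gradf : E → E}
    {hessf : E → E →L[ℝ] E} (hgradf : ∀ y, HasGradientAt f (gradf y) y)
    (hhessf : ∀ y, HasFDerivAt gradf (hessf y) y) {L : ℝ}
    (hlip : ∀ y z, ‖hessf y - hessf z‖ ≤ L * ‖y - z‖) (x h : E) :
    f (x + h) ≤ quadModel (f x) (gradf x) (hessf x) h + L / 6 * ‖h‖ ^ 3 := by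
  have hline : ∀ t : ℝ, HasDerivAt (fun u : ℝ => x + u • h) h t := fun t => by
    simpa using ((hasDerivAt_id t).smul_const h).const_add x
  set ψ : ℝ → ℝ := fun t => ⟪gradf (x + t • h), h⟫
  set χ : ℝ → ℝ := fun t => ⟪hessf (x + t • h) h, h⟫
  have hφ : ∀ t, HasDerivAt (fun u : ℝ => f (x + u • h)) (ψ t) t := fun t => by
    simpa [ψ, InnerProductSpace.toDual_apply_apply, Function.comp_def] using
      (hgradf _).hasFDerivAt.comp_hasDerivAt t (hline t)
  have hψ : ∀ t, HasDerivAt ψ (χ t) t := fun t => by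
    simpa using ((hhessf _).comp_hasDerivAt t (hline t)).inner ℝ (hasDerivAt_const t h)
  have hχ : ∀ t, 0 < t → χ t - χ 0 ≤ L * ‖h‖ ^ 3 * t := fun t ht => by
    calc χ t - χ 0 = ⟪(hessf (x + t • h) - hessf x) h, h⟫ := by
          simp [χ, inner_sub_left]
      _ ≤ ‖hessf (x + t • h) - hessf x‖ * ‖h‖ * ‖h‖ :=
          (real_inner_le_norm _ _).trans
            (mul_le_mul_of_nonneg_right (ContinuousLinearMap.le_opNorm _ _) (norm_nonneg h))
      _ ≤ L * ‖t • h‖ * ‖h‖ * ‖h‖ := by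
          have := hlip (x + t • h) x
          rw [add_sub_cancel_left] at this
          gcongr
      _ = L * ‖h‖ ^ 3 * t := by rw [norm_smul, Real.norm_of_nonneg ht.le]; ring
  have := apply_one_le_of_second_deriv_sub_le hφ hψ hχ
  simp only [one_smul, zero_smul, add_zero, ψ, χ] at this
  rw [quadModel, ← real_inner_comm h (hessf x h)]
  linarith

variable {β σ : ℝ} {g : E} {H : E →L[ℝ] E}

lemma alphaHat_nonneg (hβ : 0 ≤ β) : 0 ≤ alphaHat β σ g H := by
  unfold alphaHat
  split_ifs
  · positivity
  · exact le_min (by positivity) (Real.sqrt_nonneg _)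

lemma alphaHat_pos (hβ : 0 < β) (hσ : 0 < σ) (hg : g ≠ 0) : 0 < alphaHat β σ g H := by
  have hsqrt : 0 < Real.sqrt (3 * β / (σ * ‖g‖)) :=
    Real.sqrt_pos.mpr (by have := norm_pos_iff.mpr hg; positivity)
  unfold alphaHat
  split_ifs with hH
  · exact hsqrt
  · exact lt_min (div_pos hβ (norm_pos_iff.mpr hH)) hsqrt

lemma alphaHat_mul_norm_le (hβ : 0 ≤ β) : alphaHat β σ g H * ‖H‖ ≤ β := by
  rcases eq_or_ne H 0 with rfl | hH
  · simpa using hβ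
  · rw [← le_div_iff₀ (norm_pos_iff.mpr hH), alphaHat, if_neg hH]
    exact min_le_left _ _

lemma sq_alphaHat_mul_le (hβ : 0 ≤ β) (hσ : 0 < σ) (hg : g ≠ 0) :
    alphaHat β σ g H ^ 2 * (σ * ‖g‖) ≤ 3 * β := by
  have hσg : 0 < σ * ‖g‖ := mul_pos hσ (norm_pos_iff.mpr hg)
  rw [← le_div_iff₀ hσg, ← Real.sq_sqrt (div_nonneg (by positivity) hσg.le)]
  gcongr
  · exact alphaHat_nonneg hβ
  · unfold alphaHat
    split_ifs
    exacts [le_rfl, min_le_right _ _]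

lemma cubicModel_sHat_le (f₀ : ℝ) (hβ : 0 ≤ β) (hσ : 0 < σ) (hg : g ≠ 0) :
    cubicModel f₀ g H σ (sHat β σ g H) ≤ f₀ - (1 - β) * (alphaHat β σ g H * ‖g‖ ^ 2) := by
  set α := alphaHat β σ g H
  have hα : 0 ≤ α := alphaHat_nonneg hβ
  have hcurv : α ^ 2 / 2 * ⟪g, H g⟫ ≤ β / 2 * (α * ‖g‖ ^ 2) :=
    calc α ^ 2 / 2 * ⟪g, H g⟫ ≤ α ^ 2 / 2 * (‖g‖ * (‖H‖ * ‖g‖)) := by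
          gcongr
          exact (real_inner_le_norm _ _).trans
            (mul_le_mul_of_nonneg_left (H.le_opNorm g) (norm_nonneg g))
      _ = α * ‖H‖ / 2 * (α * ‖g‖ ^ 2) := by ring
      _ ≤ β / 2 * (α * ‖g‖ ^ 2) := by gcongr; exact alphaHat_mul_norm_le hβ
  have hcubic : σ / 6 * (α * ‖g‖) ^ 3 ≤ β / 2 * (α * ‖g‖ ^ 2) :=
    calc σ / 6 * (α * ‖g‖) ^ 3 = α ^ 2 * (σ * ‖g‖) / 6 * (α * ‖g‖ ^ 2) := by ring
      _ ≤ 3 * β / 6 * (α * ‖g‖ ^ 2) := by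
          have := sq_alphaHat_mul_le (H := H) hβ hσ hg
          gcongr
      _ = β / 2 * (α * ‖g‖ ^ 2) := by ring
  have hnorm : ‖sHat β σ g H‖ = α * ‖g‖ := by
    rw [sHat, norm_smul, norm_neg, Real.norm_of_nonneg hα]
  have hquad : quadModel f₀ g H (sHat β σ g H) = f₀ - α * ‖g‖ ^ 2 + α ^ 2 / 2 * ⟪g, H g⟫ := by
    simp only [quadModel, sHat, map_smul, real_inner_smul_left, real_inner_smul_right,
      real_inner_self_eq_norm_sq]
    ring
  rw [cubicModel, hnorm, hquad]
  linarith

lemma le_quadModel_sub_of_cubicModel_le {f₀ : ℝ} {s : E} (hβ : 0 ≤ β) (hσ : 0 < σ) (hg : g ≠ 0)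
    (hs : cubicModel f₀ g H σ s ≤ cubicModel f₀ g H σ (sHat β σ g H)) :
    (1 - β) * (alphaHat β σ g H * ‖g‖ ^ 2) + σ / 6 * ‖s‖ ^ 3 ≤
      quadModel f₀ g H 0 - quadModel f₀ g H s := by
  have h0 : quadModel f₀ g H 0 = f₀ := by simp [quadModel]
  have := hs.trans (cubicModel_sHat_le f₀ hβ hσ hg)
  rw [cubicModel] at this
  linarith

lemma quadModel_sub_pos_of_cubicModel_le {f₀ : ℝ} {s : E} (hβ0 : 0 < β) (hβ1 : β < 1)
    (hσ : 0 < σ) (hg : g ≠ 0) (hs : cubicModel f₀ g H σ s ≤ cubicModel f₀ g H σ (sHat β σ g H)) :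
    0 < quadModel f₀ g H 0 - quadModel f₀ g H s := by
  have hΔ := le_quadModel_sub_of_cubicModel_le hβ0.le hσ hg hs
  have := alphaHat_pos (H := H) hβ0 hσ hg
  have := norm_pos_iff.mpr hg
  have := sub_pos.mpr hβ1
  have : 0 < (1 - β) * (alphaHat β σ g H * ‖g‖ ^ 2) := by positivity
  linarith [show 0 ≤ σ / 6 * ‖s‖ ^ 3 by positivity]

lemma mul_le_sub_of_le_ratio {f₀ f₁ ρ η : ℝ} {s : E} (hβ0 : 0 < β) (hβ1 : β < 1) (hσ : 0 < σ)
    (hg : g ≠ 0) (hs : cubicModel f₀ g H σ s ≤ cubicModel f₀ g H σ (sHat β σ g H))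
    (hρ : ρ = (f₀ - f₁) / (quadModel f₀ g H 0 - quadModel f₀ g H s)) (hη : 0 ≤ η)
    (hηρ : η ≤ ρ) :
    η * (1 - β) * (alphaHat β σ g H * ‖g‖ ^ 2) ≤ f₀ - f₁ := by
  have hΔ := le_quadModel_sub_of_cubicModel_le hβ0.le hσ hg hs
  have hΔpos := quadModel_sub_pos_of_cubicModel_le hβ0 hβ1 hσ hg hs
  calc η * (1 - β) * (alphaHat β σ g H * ‖g‖ ^ 2)
      ≤ η * (quadModel f₀ g H 0 - quadModel f₀ g H s) := by
        rw [mul_assoc]; gcongr; linarith [show 0 ≤ σ / 6 * ‖s‖ ^ 3 by positivity]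
    _ ≤ ρ * (quadModel f₀ g H 0 - quadModel f₀ g H s) := by gcongr
    _ = f₀ - f₁ := by rw [hρ, div_mul_cancel₀ _ hΔpos.ne']

lemma mul_lt_of_ratio_lt {f₀ f₁ ρ η L : ℝ} {s : E} (hβ0 : 0 < β) (hβ1 : β < 1) (hσ : 0 < σ)
    (hg : g ≠ 0) (hs : cubicModel f₀ g H σ s ≤ cubicModel f₀ g H σ (sHat β σ g H))
    (hρ : ρ = (f₀ - f₁) / (quadModel f₀ g H 0 - quadModel f₀ g H s))
    (hf₁ : f₁ ≤ quadModel f₀ g H s + L / 6 * ‖s‖ ^ 3) (hη : η ≤ 1) (hρη : ρ < η) :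
    (1 - η) * σ < L := by
  have hΔ := le_quadModel_sub_of_cubicModel_le hβ0.le hσ hg hs
  have hΔpos := quadModel_sub_pos_of_cubicModel_le hβ0 hβ1 hσ hg hs
  have hp : 0 ≤ (1 - β) * (alphaHat β σ g H * ‖g‖ ^ 2) :=
    mul_nonneg (sub_nonneg.mpr hβ1.le) (mul_nonneg (alphaHat_nonneg hβ0.le) (sq_nonneg _))
  have h0 : quadModel f₀ g H 0 = f₀ := by simp [quadModel]
  have hdec : f₀ - f₁ < η * (quadModel f₀ g H 0 - quadModel f₀ g H s) :=
    (div_lt_iff₀ hΔpos).mp (hρ ▸ hρη)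
  have hcubic : (1 - η) * (σ / 6 * ‖s‖ ^ 3) ≤
      (1 - η) * (quadModel f₀ g H 0 - quadModel f₀ g H s) := by
    gcongr
    linarith
  have key : (1 - η) * σ * ‖s‖ ^ 3 < L * ‖s‖ ^ 3 := by linarith
  exact lt_of_mul_lt_mul_right key (by positivity)

end Model

lemma apply_add_blockIncl_le {n : ℕ} {f : EuclideanSpace ℝ (Fin n) → ℝ}
    {gradf : EuclideanSpace ℝ (Fin n) → EuclideanSpace ℝ (Fin n)}
    {hessf : EuclideanSpace ℝ (Fin n) → EuclideanSpace ℝ (Fin n) →L[ℝ] EuclideanSpace ℝ (Fin n)}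
    (hgradf : ∀ y, HasGradientAt f (gradf y) y) (hhessf : ∀ y, HasFDerivAt gradf (hessf y) y)
    {L : ℝ} (hlip : ∀ y z, ‖hessf y - hessf z‖ ≤ L * ‖y - z‖) (x : EuclideanSpace ℝ (Fin n))
    (I : Finset (Fin n)) (s : EuclideanSpace ℝ ↥I) :
    f (x + blockIncl I s) ≤
      quadModel (f x) (blockRestr I (gradf x)) (blockHess I (hessf x)) s + L / 6 * ‖s‖ ^ 3 := by
  rw [quadModel_blockRestr_blockHess, ← norm_blockIncl I s]
  exact apply_add_le_quadModel_add hgradf hhessf hlip x _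

lemma mul_min_mul_sq_le_min_mul_sq {β θ ε G Hmax σM : ℝ} (hβ : 0 ≤ β) (hθ : 0 < θ) (hε : 0 < ε)
    (hε1 : ε ≤ 1) (hHmax : 0 ≤ Hmax) (hσM : 0 < σM) (hG : θ * ε ≤ G) :
    θ * min (θ * β / Hmax) (Real.sqrt (3 * θ * β / σM)) * ε ^ 2 ≤
      min (β / Hmax) (Real.sqrt (3 * β / (σM * G))) * G ^ 2 := by
  have hG0 : 0 < G := (mul_pos hθ hε).trans_le hG
  have hcurv : θ * (θ * β / Hmax) * ε ^ 2 ≤ β / Hmax * G ^ 2 :=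
    calc θ * (θ * β / Hmax) * ε ^ 2 = β / Hmax * (θ * ε) ^ 2 := by ring
      _ ≤ β / Hmax * G ^ 2 := by gcongr
  have hsqrt : θ * Real.sqrt (3 * θ * β / σM) * ε ^ 2 ≤ Real.sqrt (3 * β / (σM * G)) * G ^ 2 := by
    rw [show θ * Real.sqrt (3 * θ * β / σM) * ε ^ 2 =
          Real.sqrt (3 * θ * β / σM * (θ * ε ^ 2) ^ 2) by
          rw [Real.sqrt_mul' _ (sq_nonneg _), Real.sqrt_sq (by positivity)]; ring,
      show Real.sqrt (3 * β / (σM * G)) * G ^ 2 = Real.sqrt (3 * β / (σM * G) * (G ^ 2) ^ 2) by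
          rw [Real.sqrt_mul' _ (sq_nonneg _), Real.sqrt_sq (by positivity)]]
    refine Real.sqrt_le_sqrt ?_
    calc 3 * θ * β / σM * (θ * ε ^ 2) ^ 2 = 3 * β / σM * (θ ^ 3 * ε ^ 4) := by ring
      _ ≤ 3 * β / σM * (θ ^ 3 * ε ^ 3) := by
          have : ε ^ 4 ≤ ε ^ 3 := pow_le_pow_of_le_one hε.le hε1 (by norm_num)
          gcongr
      _ = 3 * β / σM * (θ * ε) ^ 3 := by ring
      _ ≤ 3 * β / σM * G ^ 3 := by gcongr
      _ = 3 * β / (σM * G) * (G ^ 2) ^ 2 := by field_simp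
  calc θ * min (θ * β / Hmax) (Real.sqrt (3 * θ * β / σM)) * ε ^ 2
      = min (θ * (θ * β / Hmax) * ε ^ 2) (θ * Real.sqrt (3 * θ * β / σM) * ε ^ 2) := by
        rw [mul_min_of_nonneg _ _ hθ.le, min_mul_of_nonneg _ _ (sq_nonneg ε)]
    _ ≤ min (β / Hmax * G ^ 2) (Real.sqrt (3 * β / (σM * G)) * G ^ 2) := min_le_min hcurv hsqrt
    _ = min (β / Hmax) (Real.sqrt (3 * β / (σM * G))) * G ^ 2 :=
        (min_mul_of_nonneg _ _ (sq_nonneg G)).symm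

section AlphaHat
variable {E : Type*} [NormedAddCommGroup E] [InnerProductSpace ℝ E] {β σ σM Hmax : ℝ} {g : E}
  {H : E →L[ℝ] E}

lemma min_le_alphaHat (hβ : 0 ≤ β) (hσ : 0 < σ) (hσM : σ ≤ σM) (hH : ‖H‖ ≤ Hmax) (hg : g ≠ 0) :
    min (β / Hmax) (Real.sqrt (3 * β / (σM * ‖g‖))) ≤ alphaHat β σ g H := by
  have hsqrt : Real.sqrt (3 * β / (σM * ‖g‖)) ≤ Real.sqrt (3 * β / (σ * ‖g‖)) := by
    have := norm_pos_iff.mpr hg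
    gcongr
  unfold alphaHat
  split_ifs with hH0
  · exact (min_le_right _ _).trans hsqrt
  · exact min_le_min (div_le_div_of_nonneg_left hβ (norm_pos_iff.mpr hH0) hH) hsqrt

lemma le_alphaHat_mul_sq {θ ε : ℝ} (hβ : 0 ≤ β) (hσ : 0 < σ) (hσM : σ ≤ σM) (hH : ‖H‖ ≤ Hmax)
    (hθ : 0 < θ) (hε : 0 < ε) (hε1 : ε ≤ 1) (hg : θ * ε ≤ ‖g‖) :
    θ * min (θ * β / Hmax) (Real.sqrt (3 * θ * β / σM)) * ε ^ 2 ≤ alphaHat β σ g H * ‖g‖ ^ 2 := by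
  have hg0 : g ≠ 0 := norm_pos_iff.mp ((mul_pos hθ hε).trans_le hg)
  refine (mul_min_mul_sq_le_min_mul_sq hβ hθ hε hε1 ((norm_nonneg H).trans hH)
    (hσ.trans_le hσM) hg).trans ?_
  gcongr
  exact min_le_alphaHat hβ hσ hσM hH hg0

end AlphaHat

lemma forall_le_of_succ_le_or_le_mul {u : ℕ → ℝ} {B c M : ℝ} (h0 : u 0 ≤ M) (hc : 0 ≤ c)
    (hcB : c * B ≤ M) (hstep : ∀ k, u (k + 1) ≤ u k ∨ (u k ≤ B ∧ u (k + 1) ≤ c * u k)) (k : ℕ) :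
    u k ≤ M := by
  induction k with
  | zero => exact h0
  | succ k ih =>
    rcases hstep k with hle | ⟨hB, hle⟩
    · exact hle.trans ih
    · exact hle.trans ((mul_le_mul_of_nonneg_left hB hc).trans hcB)

lemma finite_and_ncard_le_of_antitone {F : ℕ → ℝ} (hF : Antitone F) {m c : ℝ} (hc : 0 < c)
    (hm : ∀ k, m ≤ F k) {A : Set ℕ} (hA : ∀ k ∈ A, c ≤ F k - F (k + 1)) :
    A.Finite ∧ (A.ncard : ℝ) ≤ (F 0 - m) / c := by
  have hsub : ∀ t : Finset ℕ, ↑t ⊆ A → (t.card : ℝ) ≤ (F 0 - m) / c := by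
    intro t ht
    set N := t.sup id + 1
    have htN : t ⊆ Finset.range N := fun k hk =>
      Finset.mem_range_succ_iff.mpr (Finset.le_sup (f := id) hk)
    rw [le_div_iff₀ hc]
    calc (t.card : ℝ) * c = ∑ _k ∈ t, c := by rw [Finset.sum_const, nsmul_eq_mul]
      _ ≤ ∑ k ∈ t, (F k - F (k + 1)) := Finset.sum_le_sum fun k hk => hA k (ht hk)
      _ ≤ ∑ k ∈ Finset.range N, (F k - F (k + 1)) :=
          Finset.sum_le_sum_of_subset_of_nonneg htN fun k _ _ => sub_nonneg.mpr (hF k.le_succ)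
      _ = F 0 - F N := Finset.sum_range_sub' F N
      _ ≤ F 0 - m := by linarith [hm N]
  have hfin : A.Finite := by
    by_contra hinf
    obtain ⟨t, ht, hcard⟩ := Set.Infinite.exists_subset_card_eq hinf (⌊(F 0 - m) / c⌋₊ + 1)
    have := hsub t ht
    rw [hcard] at this
    push_cast at this
    linarith [Nat.lt_floor_add_one ((F 0 - m) / c)]
  refine ⟨hfin, ?_⟩
  rw [Set.ncard_eq_toFinset_card A hfin]
  exact hsub _ (by simp)

theorem stmt17_general (n : ℕ)
    (f : EuclideanSpace ℝ (Fin n) → ℝ)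
    (gradf : EuclideanSpace ℝ (Fin n) → EuclideanSpace ℝ (Fin n))
    (hessf : EuclideanSpace ℝ (Fin n) → (EuclideanSpace ℝ (Fin n) →L[ℝ] EuclideanSpace ℝ (Fin n)))
    (hgradf : ∀ x, HasGradientAt f (gradf x) x)
    (hhessf : ∀ x, HasFDerivAt gradf (hessf x) x)
    (L : ℝ)
    (hlipL : ∀ x y, ‖hessf x - hessf y‖ ≤ L * ‖x - y‖)
    (σmin σ₀ η₁ η₂ γ₁ γ₂ γ₃ β θ : ℝ)
    (hη₁0 : 0 < η₁) (hη₂1 : η₂ < 1)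
    (hγ₂ : 1 < γ₂) (hγ₂₃ : γ₂ ≤ γ₃)
    (hβ0 : 0 < β) (hβ1 : β < 1) (hθ0 : 0 < θ)
    (x : ℕ → EuclideanSpace ℝ (Fin n)) (I : ℕ → Finset (Fin n))
    (s : ∀ k : ℕ, EuclideanSpace ℝ ↥(I k)) (σ : ℕ → ℝ) (ρ : ℕ → ℝ)
    (hσzero : σ 0 = σ₀) (hσpos : ∀ k, 0 < σ k)
    (hgne : ∀ k, gradf (x k) ≠ 0)
    (hgreedy : ∀ k, θ * ‖gradf (x k)‖ ≤ ‖blockRestr (I k) (gradf (x k))‖)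
    (hstepm : ∀ k, cubicModel (f (x k)) (blockRestr (I k) (gradf (x k)))
        (blockHess (I k) (hessf (x k))) (σ k) (s k) ≤
      cubicModel (f (x k)) (blockRestr (I k) (gradf (x k)))
        (blockHess (I k) (hessf (x k))) (σ k)
        (sHat β (σ k) (blockRestr (I k) (gradf (x k))) (blockHess (I k) (hessf (x k)))))
    (hρ : ∀ k, ρ k = (f (x k) - f (x k + blockIncl (I k) (s k))) /
      (quadModel (f (x k)) (blockRestr (I k) (gradf (x k))) (blockHess (I k) (hessf (x k))) 0 -
       quadModel (f (x k)) (blockRestr (I k) (gradf (x k))) (blockHess (I k) (hessf (x k))) (s k)))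
    (hx : ∀ k, x (k + 1) = if η₁ ≤ ρ k then x k + blockIncl (I k) (s k) else x k)
    (hσ1 : ∀ k, η₂ ≤ ρ k → max σmin (γ₁ * σ k) ≤ σ (k + 1) ∧ σ (k + 1) ≤ σ k)
    (hσ2 : ∀ k, η₁ ≤ ρ k → ρ k < η₂ → σ k ≤ σ (k + 1) ∧ σ (k + 1) ≤ γ₂ * σ k)
    (hσ3 : ∀ k, ρ k < η₁ → γ₂ * σ k ≤ σ (k + 1) ∧ σ (k + 1) ≤ γ₃ * σ k)
    (fmin Hmax : ℝ) (hHmax : 0 < Hmax)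
    (hfmin : ∀ y, f y ≤ f (x 0) → fmin ≤ f y)
    (hHb : ∀ y, f y ≤ f (x 0) → ‖hessf y‖ ≤ Hmax)
    (ε : ℝ) (hε0 : 0 < ε) (hε1 : ε ≤ 1) :
    ({k : ℕ | ε ≤ ‖gradf (x k)‖} ∩ {k : ℕ | η₁ ≤ ρ k}).Finite ∧
      (({k : ℕ | ε ≤ ‖gradf (x k)‖} ∩ {k : ℕ | η₁ ≤ ρ k}).ncard : ℝ) ≤
        (f (x 0) - fmin) /
            (θ * η₁ * (1 - β) *
              min (θ * β / Hmax) (Real.sqrt (3 * θ * β / max σ₀ (γ₃ * L / (1 - η₂))))) *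
          ε ^ (-(2 : ℝ)) := by
  set σmax := max σ₀ (γ₃ * L / (1 - η₂))
  set m := min (θ * β / Hmax) (Real.sqrt (3 * θ * β / σmax))
  have hg : ∀ k, blockRestr (I k) (gradf (x k)) ≠ 0 := fun k =>
    norm_pos_iff.mp ((mul_pos hθ0 (norm_pos_iff.mpr (hgne k))).trans_le (hgreedy k))
  have hsucc : ∀ k, η₁ ≤ ρ k → η₁ * (1 - β) * (alphaHat β (σ k) (blockRestr (I k) (gradf (x k)))
      (blockHess (I k) (hessf (x k))) * ‖blockRestr (I k) (gradf (x k))‖ ^ 2) ≤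
        f (x k) - f (x (k + 1)) := fun k hk => by
    rw [hx k, if_pos hk]
    exact mul_le_sub_of_le_ratio hβ0 hβ1 (hσpos k) (hg k) (hstepm k) (hρ k) hη₁0.le hk
  have hanti : Antitone (f ∘ x) := antitone_nat_of_succ_le fun k => by
    by_cases hk : η₁ ≤ ρ k
    · exact sub_nonneg.mp ((mul_nonneg (mul_nonneg hη₁0.le (sub_nonneg.mpr hβ1.le))
        (mul_nonneg (alphaHat_nonneg hβ0.le) (sq_nonneg _))).trans (hsucc k hk))
    · simp [hx k, if_neg hk]
  have hσ_le : ∀ k, ρ k < η₂ → σ k ≤ L / (1 - η₂) := fun k hk => by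
    rw [le_div_iff₀ (sub_pos.mpr hη₂1), mul_comm]
    exact (mul_lt_of_ratio_lt hβ0 hβ1 (hσpos k) (hg k) (hstepm k) (hρ k)
      (apply_add_blockIncl_le hgradf hhessf hlipL (x k) (I k) (s k)) hη₂1.le hk).le
  have hσmax : ∀ k, σ k ≤ σmax := by
    refine forall_le_of_succ_le_or_le_mul (B := L / (1 - η₂)) (c := γ₃)
      (hσzero.trans_le (le_max_left _ _)) (by linarith)
      (by rw [mul_div_assoc']; exact le_max_right _ _) fun k => ?_
    by_cases hρ₂ : η₂ ≤ ρ k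
    · exact .inl (hσ1 k hρ₂).2
    refine .inr ⟨hσ_le k (not_le.mp hρ₂), ?_⟩
    by_cases hρ₁ : η₁ ≤ ρ k
    · exact (hσ2 k hρ₁ (not_le.mp hρ₂)).2.trans
        (mul_le_mul_of_nonneg_right hγ₂₃ (hσpos k).le)
    · exact (hσ3 k (not_le.mp hρ₁)).2
  have hdec : ∀ k ∈ {k : ℕ | ε ≤ ‖gradf (x k)‖} ∩ {k : ℕ | η₁ ≤ ρ k},
      θ * η₁ * (1 - β) * m * ε ^ 2 ≤ (f ∘ x) k - (f ∘ x) (k + 1) := by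
    rintro k ⟨hkε, hkS⟩
    have hα := le_alphaHat_mul_sq hβ0.le (hσpos k) (hσmax k)
      ((norm_blockHess_le _ _).trans (hHb _ (hanti k.zero_le))) hθ0 hε0 hε1
      ((mul_le_mul_of_nonneg_left hkε hθ0.le).trans (hgreedy k))
    rw [show θ * η₁ * (1 - β) * m * ε ^ 2 = η₁ * (1 - β) * (θ * m * ε ^ 2) by ring]
    exact (mul_le_mul_of_nonneg_left hα
      (mul_nonneg hη₁0.le (sub_nonneg.mpr hβ1.le))).trans (hsucc k hkS)
  have hm : 0 < m := lt_min (by positivity) (Real.sqrt_pos.mpr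
    (div_pos (by positivity) ((hσzero ▸ hσpos 0).trans_le (le_max_left _ _))))
  obtain ⟨hfin, hcard⟩ := finite_and_ncard_le_of_antitone hanti
    (mul_pos (mul_pos (mul_pos (mul_pos hθ0 hη₁0) (sub_pos.mpr hβ1)) hm) (pow_pos hε0 2))
    (fun k => hfmin _ (hanti k.zero_le)) hdec
  refine ⟨hfin, hcard.trans_eq ?_⟩
  rw [Real.rpow_neg hε0.le, Real.rpow_two, ← div_eq_mul_inv, div_div]
  rfl

theorem stmt17 (n : ℕ) (hn : 0 < n)
    (f : EuclideanSpace ℝ (Fin n) → ℝ)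
    (gradf : EuclideanSpace ℝ (Fin n) → EuclideanSpace ℝ (Fin n))
    (hessf : EuclideanSpace ℝ (Fin n) → (EuclideanSpace ℝ (Fin n) →L[ℝ] EuclideanSpace ℝ (Fin n)))
    (hf : ContDiff ℝ 2 f)
    (hgradf : ∀ x, HasGradientAt f (gradf x) x)
    (hhessf : ∀ x, HasFDerivAt gradf (hessf x) x)
    (L : ℝ) (hL : 0 < L)
    (hlipL : ∀ x y, ‖hessf x - hessf y‖ ≤ L * ‖x - y‖)
    (σmin σ₀ η₁ η₂ γ₁ γ₂ γ₃ τ β θ : ℝ)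
    (hσmin : 0 < σmin) (hσ₀ : σmin ≤ σ₀)
    (hη₁0 : 0 < η₁) (hη₁₂ : η₁ ≤ η₂) (hη₂1 : η₂ < 1)
    (hγ₁0 : 0 < γ₁) (hγ₁1 : γ₁ ≤ 1) (hγ₂ : 1 < γ₂) (hγ₂₃ : γ₂ ≤ γ₃)
    (hτ : 0 ≤ τ) (hβ0 : 0 < β) (hβ1 : β < 1) (hθ0 : 0 < θ) (hθ1 : θ ≤ 1)
    (x : ℕ → EuclideanSpace ℝ (Fin n)) (I : ℕ → Finset (Fin n))
    (s : ∀ k : ℕ, EuclideanSpace ℝ ↥(I k)) (σ : ℕ → ℝ) (ρ : ℕ → ℝ)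
    (hσzero : σ 0 = σ₀) (hσpos : ∀ k, 0 < σ k)
    (hgne : ∀ k, gradf (x k) ≠ 0)
    (hgreedy : ∀ k, θ * ‖gradf (x k)‖ ≤ ‖blockRestr (I k) (gradf (x k))‖)
    (hstepg : ∀ k, ‖cubicModelGrad (blockRestr (I k) (gradf (x k)))
        (blockHess (I k) (hessf (x k))) (σ k) (s k)‖ ≤ τ * ‖s k‖ ^ 2)
    (hstepm : ∀ k, cubicModel (f (x k)) (blockRestr (I k) (gradf (x k)))
        (blockHess (I k) (hessf (x k))) (σ k) (s k) ≤
      cubicModel (f (x k)) (blockRestr (I k) (gradf (x k)))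
        (blockHess (I k) (hessf (x k))) (σ k)
        (sHat β (σ k) (blockRestr (I k) (gradf (x k))) (blockHess (I k) (hessf (x k)))))
    (hρ : ∀ k, ρ k = (f (x k) - f (x k + blockIncl (I k) (s k))) /
      (quadModel (f (x k)) (blockRestr (I k) (gradf (x k))) (blockHess (I k) (hessf (x k))) 0 -
       quadModel (f (x k)) (blockRestr (I k) (gradf (x k))) (blockHess (I k) (hessf (x k))) (s k)))
    (hx : ∀ k, x (k + 1) = if η₁ ≤ ρ k then x k + blockIncl (I k) (s k) else x k)
    (hσ1 : ∀ k, η₂ ≤ ρ k → max σmin (γ₁ * σ k) ≤ σ (k + 1) ∧ σ (k + 1) ≤ σ k)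
    (hσ2 : ∀ k, η₁ ≤ ρ k → ρ k < η₂ → σ k ≤ σ (k + 1) ∧ σ (k + 1) ≤ γ₂ * σ k)
    (hσ3 : ∀ k, ρ k < η₁ → γ₂ * σ k ≤ σ (k + 1) ∧ σ (k + 1) ≤ γ₃ * σ k)
    (fmin Hmax : ℝ) (hHmax : 0 < Hmax)
    (hfmin : ∀ y, f y ≤ f (x 0) → fmin ≤ f y)
    (hHb : ∀ y, f y ≤ f (x 0) → ‖hessf y‖ ≤ Hmax)
    (ε : ℝ) (hε0 : 0 < ε) (hε1 : ε ≤ 1) :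
    ({k : ℕ | ε ≤ ‖gradf (x k)‖} ∩ {k : ℕ | η₁ ≤ ρ k}).Finite ∧
      (({k : ℕ | ε ≤ ‖gradf (x k)‖} ∩ {k : ℕ | η₁ ≤ ρ k}).ncard : ℝ) ≤
        (f (x 0) - fmin) /
            (θ * η₁ * (1 - β) *
              min (θ * β / Hmax) (Real.sqrt (3 * θ * β / max σ₀ (γ₃ * L / (1 - η₂))))) *
          ε ^ (-(2 : ℝ)) :=
  stmt17_general n f gradf hessf hgradf hhessf L hlipL σmin σ₀ η₁ η₂ γ₁ γ₂ γ₃ β θ hη₁0 hη₂1 hγ₂ hγ₂₃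
    hβ0 hβ1 hθ0 x I s σ ρ hσzero hσpos hgne hgreedy hstepm hρ hx hσ1 hσ2 hσ3 fmin Hmax hHmax hfmin
    hHb ε hε0 hε1

end
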